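/- If Ψ is a coalition partition of a graph G, then the maximum degree of the coalition graph CG(G, Ψ) is at most Δ(G) + 1, where Δ(G) is the maximum degree of G. -/

import Mathlib

open SimpleGraph

attribute [local instance] Classical.propDecidable

def Dominates {V : Type*} (G : SimpleGraph V) (S : Set V) : Prop :=
  ∀ v, v ∉ S → ∃ u ∈ S, G.Adj u v

def Coalition {V : Type*} (G : SimpleGraph V) (A B : Set V) : Prop :=
  Disjoint A B ∧ ¬ Dominates G A ∧ ¬ Dominates G B ∧ Dominates G (A ∪ B)

def IsCoalitionPartition {V : Type*} (G : SimpleGraph V) (P : Finset (Set V)) : Prop :=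
  (∀ A ∈ P, A.Nonempty) ∧
  (∀ A ∈ P, ∀ B ∈ P, A ≠ B → Disjoint A B) ∧
  (∀ v : V, ∃ A ∈ P, v ∈ A) ∧
  (∀ A ∈ P, (Dominates G A ∧ ∃ v, A = {v}) ∨
    (¬ Dominates G A ∧ ∃ B ∈ P, B ≠ A ∧ Coalition G A B))

noncomputable def coalitionNumber {V : Type*} (G : SimpleGraph V) : ℕ :=
  sSup {n | ∃ P : Finset (Set V), IsCoalitionPartition G P ∧ P.card = n}

def coalitionGraph {V : Type*} (G : SimpleGraph V) (P : Finset (Set V)) :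
    SimpleGraph {A : Set V // A ∈ P} where
  Adj A B := Coalition G A.1 B.1
  symm := by
    constructor
    rintro A B ⟨d, na, nb, u⟩
    exact ⟨d.symm, nb, na, by rwa [Set.union_comm]⟩
  loopless := by
    constructor
    rintro ⟨A, hA⟩ ⟨d, na, nb, u⟩
    rw [Set.union_self] at u
    exact na u

/-!
A part `A` that does not dominate misses some vertex `v` together with all of its neighbours.
Every coalition partner `B` of `A` must then dominate `v`, so `B` meets the closed neighbourhood
`N[v]`. The partners are pairwise disjoint, so there are at most `|N[v]| = deg v + 1 ≤ Δ(G) + 1`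
of them.
-/

theorem Finset.card_le_card_of_pairwiseDisjoint_of_forall_inter_nonempty {ι α : Type*}
    {s : Finset ι} {f : ι → Set α} (hf : (s : Set ι).PairwiseDisjoint f) (T : Finset α)
    (hT : ∀ i ∈ s, ∃ x ∈ T, x ∈ f i) : s.card ≤ T.card := by
  choose g hgT hgf using hT
  rw [← Finset.card_attach]
  refine Finset.card_le_card_of_injOn (fun i => g i.1 i.2) (fun i _ => hgT i.1 i.2) ?_
  intro i _ j _ (hij : g i.1 i.2 = g j.1 j.2)
  by_contra hne
  exact Set.disjoint_left.mp (hf i.2 j.2 (Subtype.val_injective.ne hne)) (hgf i.1 i.2)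
    (hij ▸ hgf j.1 j.2)

section

variable {V : Type*} {G : SimpleGraph V}

theorem exists_notMem_forall_not_adj_of_not_dominates {A : Set V} (hA : ¬ Dominates G A) :
    ∃ v ∉ A, ∀ u ∈ A, ¬ G.Adj u v := by
  simpa [Dominates] using hA

theorem Coalition.exists_mem_eq_or_adj {A B : Set V} (hAB : Coalition G A B) {v : V}
    (hvA : v ∉ A) (hv : ∀ u ∈ A, ¬ G.Adj u v) : ∃ w ∈ B, w = v ∨ G.Adj w v := by
  by_cases hvB : v ∈ B
  · exact ⟨v, hvB, Or.inl rfl⟩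
  obtain ⟨u, hu | hu, huv⟩ := hAB.2.2.2 v (by simp [hvA, hvB])
  · exact absurd huv (hv u hu)
  · exact ⟨u, hu, Or.inr huv⟩

theorem coalitionGraph_degree_le [Fintype V] {P : Finset (Set V)}
    (hP : (P : Set (Set V)).PairwiseDisjoint id) (A : {A : Set V // A ∈ P}) :
    (coalitionGraph G P).degree A ≤ G.maxDegree + 1 := by
  by_cases hA : Dominates G A.1
  · have : (coalitionGraph G P).degree A = 0 :=
      Finset.card_eq_zero.mpr <| Finset.eq_empty_of_forall_notMem fun B hB =>
        ((coalitionGraph G P).mem_neighborFinset A B).mp hB |>.2.1 hA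
    omega
  obtain ⟨v, hvA, hv⟩ := exists_notMem_forall_not_adj_of_not_dominates hA
  have hdisj : ((coalitionGraph G P).neighborFinset A : Set _).PairwiseDisjoint Subtype.val :=
    fun B _ C _ hBC => hP B.2 C.2 (Subtype.val_injective.ne hBC)
  calc (coalitionGraph G P).degree A
      ≤ (insert v (G.neighborFinset v)).card :=
        Finset.card_le_card_of_pairwiseDisjoint_of_forall_inter_nonempty hdisj _ fun B hB => by
          obtain ⟨w, hwB, rfl | hwv⟩ :=
            (((coalitionGraph G P).mem_neighborFinset A B).mp hB).exists_mem_eq_or_adj hvA hv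
          · exact ⟨w, Finset.mem_insert_self _ _, hwB⟩
          · exact ⟨w, Finset.mem_insert_of_mem (by simpa using hwv.symm), hwB⟩
    _ ≤ G.degree v + 1 := Finset.card_insert_le _ _
    _ ≤ G.maxDegree + 1 := Nat.add_le_add_right (G.degree_le_maxDegree v) 1

end

theorem stmt1 {V : Type*} [Fintype V] (G : SimpleGraph V) (P : Finset (Set V))
    (hP : IsCoalitionPartition G P) :
    (coalitionGraph G P).maxDegree ≤ G.maxDegree + 1 :=
  maxDegree_le_of_forall_degree_le _ _ <|
    coalitionGraph_degree_le fun _ hA _ hB hAB => hP.2.1 _ hA _ hB hAB
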